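/- Let G = (V, E) be a finite digraph with state vertices V_α and control vertices having no in-edges, and suppose every state vertex is reachable from some control vertex (G is accessible). Fix an ordering β₁, ..., β_m of the control vertices. Define V*_{β_i} := {β_i} ∪ {reachable state vertices from β_i} and V_{β_i} := V*_{β_i} \ (V*_{β_1} ∪ ⋯ ∪ V*_{β_{i−1}}). Then the sets V_{β_1}, ..., V_{β_m} are pairwise disjoint, their union is all of V, and for each i, every vertex of V_{β_i} is reachable from β_i by a directed path lying entirely inside V_{β_i}. -/

import Mathlib

/-!
The sets `V_{β i}` are the `disjointed` family of the reachability sets `V*_{β i}`, so they are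
pairwise disjoint and have the same union as the `V*_{β i}`, which is everything by
accessibility. For the paths: the union of earlier reachability sets is closed under taking
successors, so if `v ∈ V_{β i}` then every vertex on a path from `β i` to `v` also lies in
`V_{β i}`.
-/

theorem Set.diff_iUnion_lt_eq_disjointed {α ι : Type*} [Preorder ι] [LocallyFiniteOrderBot ι]
    (f : ι → Set α) (i : ι) : f i \ ⋃ k : {k : ι // k < i}, f k = disjointed f i := by
  simp only [disjointed_eq_inter_compl, Set.sdiff_eq, Set.compl_iUnion, Set.iInter_subtype]

namespace Relation

variable {α : Type*} {r : α → α → Prop}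

theorem iUnion_reflTransGen_succ_mem {ι : Type*} {c : ι → α} {x y : α}
    (hxy : r x y) (hx : x ∈ ⋃ k, {z | ReflTransGen r (c k) z}) :
    y ∈ ⋃ k, {z | ReflTransGen r (c k) z} := by
  obtain ⟨k, hk⟩ := Set.mem_iUnion.1 hx
  exact Set.mem_iUnion.2 ⟨k, ReflTransGen.tail hk hxy⟩

theorem ReflTransGen.restrict_diff {T : Set α} (hT : ∀ ⦃x y⦄, r x y → x ∈ T → y ∈ T)
    {a b : α} (hab : ReflTransGen r a b) (hb : b ∉ T) :
    ReflTransGen (fun x y => r x y ∧ x ∈ {z | ReflTransGen r a z} \ T ∧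
      y ∈ {z | ReflTransGen r a z} \ T) a b := by
  induction hab with
  | refl => exact .refl
  | @tail x y hax hxy ih =>
    have hx : x ∉ T := fun hxT => hb (hT hxy hxT)
    exact (ih hx).tail ⟨hxy, ⟨hax, hx⟩, ⟨hax.tail hxy, hb⟩⟩

end Relation

theorem stmt14_general {V : Type*} (E : V → V → Prop) (isCtrl : V → Prop)
    (m : ℕ) (β : Fin m → V)
    (hβrange : ∀ v, isCtrl v ↔ ∃ i, β i = v)
    (hacc : ∀ v, ¬ isCtrl v → ∃ i, Relation.ReflTransGen E (β i) v) :
    let Vstar : Fin m → Set V := fun i => {v | Relation.ReflTransGen E (β i) v}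
    let Vb : Fin m → Set V := fun i => Vstar i \ ⋃ k : {k : Fin m // k < i}, Vstar k
    (∀ i j, i ≠ j → Disjoint (Vb i) (Vb j)) ∧
      (⋃ i, Vb i) = Set.univ ∧
      (∀ i, ∀ v ∈ Vb i,
        Relation.ReflTransGen (fun x y => E x y ∧ x ∈ Vb i ∧ y ∈ Vb i) (β i) v) := by
  intro Vstar Vb
  have hVb : Vb = disjointed Vstar := funext (Set.diff_iUnion_lt_eq_disjointed Vstar)
  refine ⟨fun i j hij => hVb ▸ disjoint_disjointed Vstar hij, ?_, fun i v hv => ?_⟩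
  · rw [hVb, iUnion_disjointed, Set.eq_univ_iff_forall]
    intro v
    by_cases hv : isCtrl v
    · obtain ⟨i, rfl⟩ := (hβrange v).1 hv
      exact Set.mem_iUnion.2 ⟨i, .refl⟩
    · exact Set.mem_iUnion.2 (hacc v hv)
  · exact hv.1.restrict_diff (fun _ _ => Relation.iUnion_reflTransGen_succ_mem) hv.2

/-- Partitioning an accessible digraph by control nodes: with control vertices having
no in-edges and every state vertex reachable from some control vertex, the sets
`V_{β i} := V*_{β i} \ (V*_{β 1} ∪ ⋯ ∪ V*_{β (i-1)})` (where `V*_{β i}` is the set of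
vertices reachable from `β i`) are pairwise disjoint, cover all of `V`, and every
vertex of `V_{β i}` is reachable from `β i` by a directed path lying inside `V_{β i}`. -/
theorem stmt14 {V : Type*} [Fintype V] (E : V → V → Prop) (isCtrl : V → Prop)
    (m : ℕ) (β : Fin m → V) (hβinj : Function.Injective β)
    (hβrange : ∀ v, isCtrl v ↔ ∃ i, β i = v)
    (hnoIn : ∀ v w, isCtrl w → ¬ E v w)
    (hacc : ∀ v, ¬ isCtrl v → ∃ i, Relation.ReflTransGen E (β i) v) :
    let Vstar : Fin m → Set V := fun i => {v | Relation.ReflTransGen E (β i) v}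
    let Vb : Fin m → Set V := fun i => Vstar i \ ⋃ k : {k : Fin m // k < i}, Vstar k
    (∀ i j, i ≠ j → Disjoint (Vb i) (Vb j)) ∧
      (⋃ i, Vb i) = Set.univ ∧
      (∀ i, ∀ v ∈ Vb i,
        Relation.ReflTransGen (fun x y => E x y ∧ x ∈ Vb i ∧ y ∈ Vb i) (β i) v) :=
  stmt14_general E isCtrl m β hβrange hacc
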